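/- For each p with n_p ≥ 2 and every ν ∈ ℤ_{≥0}^{n−1} with ∑_{a=1}^{n_p−1} ν_a > k_p, the operator ∏_{a=1}^{n_p−1} x̃_a(z_p)^{ν_a} annihilates the whole filtered tensor product F_Z; in particular it annihilates the cyclic vector v = v_{k_1}^{(n_1)} ⊗ ⋯ ⊗ v_{k_N}^{(n_N)}. -/

import Mathlib

open MvPolynomial

noncomputable section

/-- The ideal `J_k^{(m)}` of `ℂ[x_1,…,x_{n-1}]`: generated by `x_m,…,x_{n-1}` and all
monomials of degree `k+1` in `x_1,…,x_{m-1}`. -/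
def Jmk (n m k : ℕ) : Ideal (MvPolynomial (Fin (n - 1)) ℂ) :=
  Ideal.span
    ({u | ∃ i : Fin (n - 1), m ≤ i.val + 1 ∧ u = X i} ∪
     {u | ∃ ν : Fin (n - 1) → ℕ, (∀ i : Fin (n - 1), m ≤ i.val + 1 → ν i = 0) ∧
        (∑ i, ν i) = k + 1 ∧ u = ∏ i, X i ^ ν i})

/-- `V_k^{(m)}` -/
abbrev Vmk (n m k : ℕ) := MvPolynomial (Fin (n - 1)) ℂ ⧸ Jmk n m k

variable (n N : ℕ) (nn kk : Fin N → ℕ)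

/-- The tensor product `F_Z = V_{k_1}^{(n_1)} ⊗ ⋯ ⊗ V_{k_N}^{(n_N)}`. -/
abbrev FZten := PiTensorProduct ℂ (fun p : Fin N => Vmk n (nn p) (kk p))

/-- `x_a^{(p)}`: multiplication by `x_a` on the `p`-th tensor factor. -/
def xfac (a : Fin (n - 1)) (p : Fin N) :
    Module.End ℂ (FZten n N nn kk) :=
  PiTensorProduct.map (Function.update
    (fun q => (LinearMap.id : Vmk n (nn q) (kk q) →ₗ[ℂ] Vmk n (nn q) (kk q))) p
    (LinearMap.mulLeft ℂ (Ideal.Quotient.mk (Jmk n (nn p) (kk p)) (X a))))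

variable (z : Fin N → ℂ)

/-- the operator `x_a[i] = ∑_p z_p^i x_a^{(p)}` -/
def xopF (a : Fin (n - 1)) (i : ℕ) : Module.End ℂ (FZten n N nn kk) :=
  ∑ p : Fin N, z p ^ i • xfac n N nn kk a p

/-- `X_a = {p : n_p > a}` -/
def Xset (a : Fin (n - 1)) : Finset (Fin N) :=
  Finset.univ.filter (fun p => a.val + 1 < nn p)

/-- `N_a = |X_a|` -/
def NcF (a : Fin (n - 1)) : ℕ := (Xset n N nn a).card

/-- the `s`-th elementary symmetric polynomial of the `z_p`, `p ∈ X_a` -/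
def esymZ (a : Fin (n - 1)) (s : ℕ) : ℂ :=
  ∑ S ∈ (Xset n N nn a).powersetCard s, ∏ p ∈ S, z p

/-- `x̃_a[i] = ∑_{s=0}^i (-1)^s x_a[i-s] σ_{a,s}` -/
def xtil (a : Fin (n - 1)) (i : ℕ) : Module.End ℂ (FZten n N nn kk) :=
  ∑ s ∈ Finset.range (i + 1),
    ((-1 : ℂ) ^ s * esymZ n N nn z a s) • xopF n N nn kk z a (i - s)

/-- `x̃_a(w) = ∑_{i=0}^{N_a-1} x̃_a[i] w^{N_a-1-i}` -/
def xtilz (a : Fin (n - 1)) (w : ℂ) : Module.End ℂ (FZten n N nn kk) :=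
  ∑ i ∈ Finset.range (NcF n N nn a),
    w ^ (NcF n N nn a - 1 - i) • xtil n N nn kk z a i

/-!
For `a` with `p ∈ X_a`, expanding `x̃_a(w)` over the tensor factors gives
`x̃_a(w) = ∑_q C_q(w) x_a^{(q)}`, where `(w - z_q) C_q(w) = P_a(w) - P_a(z_q)` for
`P_a(t) = ∏_{r ∈ X_a} (t - z_r)` (Vieta). At `w = z_p` both values of `P_a` vanish for `q ∈ X_a`,
so distinctness of the `z`'s kills every `q ≠ p` in `X_a`, while `x_a^{(q)} = 0` for `q ∉ X_a`.
Hence `x̃_a(z_p)` is a multiple of `x_a^{(p)}`, and the whole product is multiplication on the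
`p`-th factor by a monomial of degree `> k_p` in `x_1, …, x_{n_p - 1}`, which lies in
`J_{k_p}^{(n_p)}`.
-/

open scoped TensorProduct

open Finset

theorem prod_sub_eq_sum_esymm {ι R : Type*} [CommRing R] (S : Finset ι) (z : ι → R) (t : R) :
    ∏ r ∈ S, (t - z r) =
      ∑ s ∈ range (#S + 1), (-1) ^ s * (∑ T ∈ S.powersetCard s, ∏ r ∈ T, z r) * t ^ (#S - s) := by
  have := congrArg (Polynomial.eval t) (Multiset.prod_X_sub_X_eq_sum_esymm (S.val.map z))
  simp only [Polynomial.eval_multiset_prod, Multiset.map_map, Polynomial.eval_finsetSum,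
    Multiset.card_map, Function.comp_def, Polynomial.eval_sub, Polynomial.eval_X,
    Polynomial.eval_C, Polynomial.eval_mul, Polynomial.eval_pow, Polynomial.eval_neg,
    Polynomial.eval_one, esymm_map_val, ← card_def] at this
  rw [prod_eq_multiset_prod]
  simpa only [mul_assoc] using this

-- The second factor on the left is the divided difference `(P w - P t) / (w - t)` of
-- `P = ∑ s ≤ m, c s X ^ (m - s)`.
theorem sub_mul_sum_pow_mul_sum {R : Type*} [CommRing R] (c : ℕ → R) (m : ℕ) (w t : R) :
    (w - t) * ∑ i ∈ range m, w ^ (m - 1 - i) * ∑ s ∈ range (i + 1), c s * t ^ (i - s) =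
      ∑ s ∈ range (m + 1), c s * w ^ (m - s) - ∑ s ∈ range (m + 1), c s * t ^ (m - s) := by
  have hflip : ∑ i ∈ range m, w ^ (m - 1 - i) * ∑ s ∈ range (i + 1), c s * t ^ (i - s) =
      ∑ s ∈ range m, c s * ∑ j ∈ range (m - s), t ^ j * w ^ (m - s - 1 - j) := by
    simp only [mul_sum]
    rw [← sum_range_diag_flip m (fun s j => c s * (t ^ j * w ^ (m - s - 1 - j)))]
    refine sum_congr rfl fun i hi => sum_congr rfl fun s hs => ?_
    rw [mem_range] at hi hs
    rw [show m - s - 1 - (i - s) = m - 1 - i by omega]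
    ring
  rw [hflip, mul_sum, ← sum_sub_distrib, sum_range_succ, Nat.sub_self,
    pow_zero, pow_zero, sub_self, add_zero]
  refine sum_congr rfl fun s _ => ?_
  rw [mul_left_comm, mul_comm (w - t), ← neg_sub t w, mul_neg, geom_sum₂_mul]
  ring

namespace PiTensorProduct

variable {ι R : Type*} [CommSemiring R] [DecidableEq ι]

def endFactor {M : ι → Type*} [∀ i, AddCommMonoid (M i)] [∀ i, Module R (M i)] (p : ι) :
    Module.End R (M p) →ₐ[R] Module.End R (⨂[R] i, M i) :=
  .ofLinearMap ((mapMultilinear R M M).toLinearMap 1 p)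
    (by
      rw [MultilinearMap.toLinearMap_apply, mapMultilinear_apply, Function.update_one]
      exact PiTensorProduct.map_one)
    (fun u v => by
      simp only [MultilinearMap.toLinearMap_apply, mapMultilinear_apply]
      rw [← PiTensorProduct.map_mul, ← Pi.mul_def, ← Function.update_mul, one_mul])

def mulFactor {A : ι → Type*} [∀ i, Semiring (A i)] [∀ i, Algebra R (A i)] (p : ι) :
    A p →ₐ[R] Module.End R (⨂[R] i, A i) :=
  (endFactor p).comp (Algebra.lmul R (A p))

end PiTensorProduct

open PiTensorProduct

variable {n N nn kk z}

theorem X_mem_Jmk {m k : ℕ} {i : Fin (n - 1)} (h : m ≤ i.val + 1) : X i ∈ Jmk n m k :=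
  Ideal.subset_span (Or.inl ⟨i, h, rfl⟩)

theorem prod_X_pow_mem_Jmk {m k : ℕ} (e : Fin (n - 1) → ℕ)
    (he : ∀ i : Fin (n - 1), m ≤ i.val + 1 → e i = 0) (hk : k + 1 ≤ ∑ i, e i) :
    ∏ i, (X i : MvPolynomial (Fin (n - 1)) ℂ) ^ e i ∈ Jmk n m k := by
  obtain ⟨g, hge, hg⟩ := Finsupp.exists_le_degree_eq (Finsupp.equivFunOnFinite.symm e) (k + 1)
    (by simpa [Finsupp.degree_eq_sum] using hk)
  rw [Finsupp.degree_eq_sum] at hg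
  exact Ideal.mem_of_dvd _ (prod_dvd_prod_of_dvd _ _ fun i _ => pow_dvd_pow _ (hge i))
    (Ideal.subset_span (Or.inr
      ⟨g, fun i hi => Nat.eq_zero_of_le_zero ((hge i).trans_eq (he i hi)), hg, rfl⟩))

theorem xfac_eq_mulFactor (a : Fin (n - 1)) (p : Fin N) :
    xfac n N nn kk a p = mulFactor p (Ideal.Quotient.mk (Jmk n (nn p) (kk p)) (X a)) := rfl

theorem xfac_eq_zero {a : Fin (n - 1)} {q : Fin N} (hq : q ∉ Xset n N nn a) :
    xfac n N nn kk a q = 0 := by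
  rw [xfac_eq_mulFactor, Ideal.Quotient.eq_zero_iff_mem.2 (X_mem_Jmk (by simpa [Xset] using hq)),
    map_zero]

theorem xtilz_eq_sum_smul_xfac (a : Fin (n - 1)) (w : ℂ) :
    xtilz n N nn kk z a w = ∑ q, (∑ i ∈ range (NcF n N nn a), w ^ (NcF n N nn a - 1 - i) *
      ∑ s ∈ range (i + 1), (-1) ^ s * esymZ n N nn z a s * z q ^ (i - s)) • xfac n N nn kk a q := by
  simp only [xtilz, xtil, xopF, smul_sum, smul_smul, sum_smul, mul_sum]
  conv_rhs => rw [sum_comm]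
  exact sum_congr rfl fun i _ => sum_comm

theorem xtilz_eq_smul_xfac (hz : ∀ p q : Fin N, p ≠ q → z p ≠ z q) {a : Fin (n - 1)} {p : Fin N}
    (hp : p ∈ Xset n N nn a) : ∃ c : ℂ, xtilz n N nn kk z a (z p) = c • xfac n N nn kk a p := by
  have hP : ∀ r ∈ Xset n N nn a, ∑ s ∈ range (NcF n N nn a + 1),
      (-1) ^ s * esymZ n N nn z a s * z r ^ (NcF n N nn a - s) = 0 := fun r hr =>
    (prod_sub_eq_sum_esymm _ z (z r)).symm.trans (prod_eq_zero hr (sub_self _))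
  rw [xtilz_eq_sum_smul_xfac]
  refine ⟨_, sum_eq_single p (fun q _ hqp => ?_) (by simp)⟩
  by_cases hq : q ∈ Xset n N nn a
  · have h := sub_mul_sum_pow_mul_sum (fun s => (-1) ^ s * esymZ n N nn z a s) (NcF n N nn a)
      (z p) (z q)
    rw [hP p hp, hP q hq, sub_self] at h
    rw [(mul_eq_zero.1 h).resolve_left (sub_ne_zero.2 (hz p q hqp.symm)), zero_smul]
  · rw [xfac_eq_zero hq, smul_zero]

theorem stmt3 (n N : ℕ) (nn kk : Fin N → ℕ)
    (z : Fin N → ℂ) (hz : ∀ p q : Fin N, p ≠ q → z p ≠ z q)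
    (p : Fin N)
    (ν : Fin (n - 1) → ℕ)
    (hν : kk p < ∑ a ∈ Finset.univ.filter (fun a : Fin (n - 1) => a.val + 1 < nn p), ν a) :
    (List.ofFn fun a : Fin (n - 1) => (xtilz n N nn kk z a (z p)) ^ (if a.val + 1 < nn p then ν a else 0)).prod = 0 ∧
    (List.ofFn fun a : Fin (n - 1) => (xtilz n N nn kk z a (z p)) ^ (if a.val + 1 < nn p then ν a else 0)).prod
      (PiTensorProduct.tprod ℂ (fun q => Ideal.Quotient.mk (Jmk n (nn q) (kk q)) 1)) = 0 := by
  set e : Fin (n - 1) → ℕ := fun a => if a.val + 1 < nn p then ν a else 0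
  let φ := (mulFactor (A := fun q => Vmk n (nn q) (kk q)) p).comp
    (Ideal.Quotient.mkₐ ℂ (Jmk n (nn p) (kk p)))
  have hfactor : ∀ a, ∃ c : ℂ, xtilz n N nn kk z a (z p) ^ e a = φ ((C c * X a) ^ e a) := by
    intro a
    by_cases ha : a.val + 1 < nn p
    · obtain ⟨c, hc⟩ := xtilz_eq_smul_xfac hz (p := p) (by simpa [Xset] using ha)
      refine ⟨c, ?_⟩
      rw [hc, C_mul', map_pow, map_smul]
      rfl
    · exact ⟨1, by simp [e, ha]⟩
  choose c hc using hfactor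
  have hmem : ∏ a, (C (c a) * X a) ^ e a ∈ Jmk n (nn p) (kk p) := by
    simp only [mul_pow, prod_mul_distrib]
    exact Ideal.mul_mem_left _ _ (prod_X_pow_mem_Jmk e (fun a ha => if_neg (by omega))
      (by rwa [sum_filter] at hν))
  have hzero : (List.ofFn fun a => xtilz n N nn kk z a (z p) ^ e a).prod = 0 := by
    rw [funext hc, show (fun a => φ ((C (c a) * X a) ^ e a)) = φ ∘ fun a => (C (c a) * X a) ^ e a
      from rfl, ← List.map_ofFn, ← map_list_prod, List.prod_ofFn]
    exact (congrArg (mulFactor p) (Ideal.Quotient.eq_zero_iff_mem.2 hmem)).trans (map_zero _)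
  exact ⟨hzero, by rw [hzero, LinearMap.zero_apply]⟩

end
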